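/- For any nonnegative integers k, r and positive integers ℓ, N, there exists an integer N* ≥ N such that the following holds: let G be a graph, S ⊆ V(G) with |S| ≤ k, Z ⊆ N_G^{≤r}[S], m a positive integer, c_Z : Z → [m] any function, and c an m-coloring of (G−Z)^ℓ all of whose monochromatic components have weak diameter in (G−Z)^ℓ at most N. Then the combined m-coloring c ∪ c_Z of G^ℓ has all monochromatic components of weak diameter in G^ℓ at most N*. Moreover one may take N* = f(k) where f(0) = N and f(α) = 2r + 2ℓ + 2f(α−1). -/

import Mathlib

/-!
Realise each step of a monochromatic walk of `G^ℓ` by a walk of `G` of length `≤ ℓ`, and allow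
these walks to pass only through the vertices of `Z` lying within `r` of a set `A` of centres;
initially `A = S`, which allows all of `Z`. Induct on `|A|`. If `A = ∅` the steps avoid `Z`, so
the walk is monochromatic in `(G - Z)^ℓ` and the hypothesis on `c` applies. Otherwise pick
`s ∈ A`. A step between two vertices at distance `≥ r + ℓ` from `s` cannot come within `r` of
`s`, so a walk staying that far from `s` only needs the centres `A \ {s}`. If the walk does come
closer, its first and last such vertices lie within `f(k-1) + 1` of its two ends, and each within
`r + ℓ - 1` of `s`: the ends are at distance `≤ 2 f(k-1) + 2r + 2ℓ = f(k)`.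
-/

open SimpleGraph
attribute [local instance] Classical.propDecidable

/-- The ℓ-th power of a graph: distinct vertices are adjacent iff their
distance in `G` is at most `ℓ` (using the extended distance, so unreachable
pairs are non-adjacent). -/
def SimpleGraph.pow {V : Type} (G : SimpleGraph V) (ℓ : ℕ) : SimpleGraph V where
  Adj u v := u ≠ v ∧ G.edist u v ≤ ℓ
  symm := by
    constructor; intro u v h
    exact ⟨h.1.symm, by rw [SimpleGraph.edist_comm]; exact h.2⟩
  loopless := by constructor; intro v h; exact h.1 rfl

/-- `MonoReach H c u v` : `u` and `v` lie in the same `c`-monochromatic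
component of `H` (joined by a walk all of whose vertices get the same color). -/
def MonoReach {V : Type} {α : Type} (H : SimpleGraph V) (c : V → α) : V → V → Prop :=
  Relation.ReflTransGen (fun a b => H.Adj a b ∧ c a = c b)

/-- `N_G^{≤ r}[S]` : vertices joined to `S` by a path of length at most `r`. -/
def ballSet {V : Type} (G : SimpleGraph V) (S : Set V) (r : ℕ) : Set V :=
  {v | ∃ s ∈ S, G.edist s v ≤ r}

/-- Tree-decomposition of `G` with tree `Tg` and bags `bag`. -/
def IsTreeDecomp {V T : Type} (G : SimpleGraph V) (Tg : SimpleGraph T) (bag : T → Set V) : Prop :=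
  Tg.Connected ∧ Tg.IsAcyclic ∧
  (∀ v, ∃ t, v ∈ bag t) ∧
  (∀ u v, G.Adj u v → ∃ t, u ∈ bag t ∧ v ∈ bag t) ∧
  (∀ v, (Tg.induce {t | v ∈ bag t}).Preconnected)

/-- A layering of `G`: every edge joins two consecutive layers. -/
def IsLayering {V : Type} (G : SimpleGraph V) (L : V → ℕ) : Prop :=
  ∀ u v, G.Adj u v → L u ≤ L v + 1 ∧ L v ≤ L u + 1

/-- Layered tree-width at most `w`. -/
def LayeredTreewidthLE (V : Type) (G : SimpleGraph V) (w : ℕ) : Prop :=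
  ∃ (T : Type) (Tg : SimpleGraph T) (bag : T → Set V) (L : V → ℕ),
    IsTreeDecomp G Tg bag ∧ IsLayering G L ∧
    ∀ t i, (bag t ∩ L ⁻¹' {i}).encard ≤ w

/-- The explicit control function: `f 0 = N`, `f (α+1) = 2r + 2ℓ + 2·f α`. -/
def fstar (r ℓ N : ℕ) : ℕ → ℕ
  | 0 => N
  | (k+1) => 2*r + 2*ℓ + 2 * fstar r ℓ N k

namespace SimpleGraph

variable {V : Type} {G : SimpleGraph V} {ℓ : ℕ}

lemma edist_map_le {W : Type*} {H : SimpleGraph W} (f : H →g G) (u v : W) :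
    G.edist (f u) (f v) ≤ H.edist u v := by
  rcases eq_or_ne (H.edist u v) ⊤ with h | h
  · exact h ▸ le_top
  · obtain ⟨p, hp⟩ := exists_walk_of_edist_ne_top h
    rw [← hp, ← Walk.length_map f]
    exact edist_le _

lemma le_pow (hℓ : 0 < ℓ) : G ≤ G.pow ℓ := fun _ _ h ↦
  ⟨h.ne, (edist_eq_one_iff_adj.mpr h).trans_le (by exact_mod_cast hℓ)⟩

lemma edist_pow_le_edist_induce_pow (s : Set V) (u v : s) :
    (G.pow ℓ).edist u v ≤ ((G.induce s).pow ℓ).edist u v :=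
  edist_map_le (G := G.pow ℓ) (H := (G.induce s).pow ℓ)
    ⟨Subtype.val, fun h ↦ ⟨fun e ↦ h.1 (Subtype.ext e),
      (edist_map_le (Embedding.induce s).toHom _ _).trans h.2⟩⟩ u v

lemma Walk.edist_add_edist_le_length {a b x : V} (p : G.Walk a b) (hx : x ∈ p.support) :
    G.edist a x + G.edist x b ≤ p.length := by
  rw [← p.take_spec hx, Walk.length_append]
  push_cast
  exact add_le_add (edist_le _) (edist_le _)

/-- On the complement of `Y` this is `(G - Y)^ℓ`, but it lives on all of `V`, so that the
excluded set can shrink along the induction without changing the vertex type. -/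
def powAvoiding (G : SimpleGraph V) (Y : Set V) (ℓ : ℕ) : SimpleGraph V where
  Adj a b := a ≠ b ∧ ∃ p : G.Walk a b, p.length ≤ ℓ ∧ ∀ x ∈ p.support, x ∉ Y
  symm := ⟨fun _ _ ⟨hne, p, hp, hY⟩ ↦
    ⟨hne.symm, p.reverse, by simpa using hp, fun x hx ↦ hY x (by simpa using hx)⟩⟩
  loopless := ⟨fun _ h ↦ h.1 rfl⟩

lemma powAvoiding_le_pow (Y : Set V) : G.powAvoiding Y ℓ ≤ G.pow ℓ :=
  fun _ _ ⟨hne, p, hp, _⟩ ↦ ⟨hne, (edist_le p).trans (by exact_mod_cast hp)⟩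

lemma pow_le_powAvoiding_empty : G.pow ℓ ≤ G.powAvoiding ∅ ℓ := by
  rintro a b ⟨hne, hd⟩
  obtain ⟨p, hp⟩ := exists_walk_of_edist_ne_top (ne_top_of_le_ne_top (ENat.natCast_ne_top ℓ) hd)
  exact ⟨hne, p, by exact_mod_cast hp ▸ hd, fun _ _ ↦ id⟩

lemma powAvoiding_adj_induce {Y : Set V} {a b : V} (h : (G.powAvoiding Y ℓ).Adj a b) :
    ∃ (ha : a ∉ Y) (hb : b ∉ Y), ((G.induce {v | v ∉ Y}).pow ℓ).Adj ⟨a, ha⟩ ⟨b, hb⟩ := by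
  obtain ⟨hne, p, hp, hY⟩ := h
  refine ⟨hY a p.start_mem_support, hY b p.end_mem_support,
    fun e ↦ hne (congrArg Subtype.val e), (edist_le (p.induce {v | v ∉ Y} hY)).trans ?_⟩
  have hlen : (p.induce {v | v ∉ Y} hY).length = p.length := by
    have h := congrArg Walk.length (p.map_induce (s := {v | v ∉ Y}) hY)
    rwa [Walk.length_map] at h
  exact_mod_cast hlen ▸ hp

end SimpleGraph

lemma Relation.ReflTransGen.restrict_or_exists_reflGen {β : Type*} {R R' : β → β → Prop}
    {P : β → Prop} (hR : ∀ a b, R a b → ¬ P a → ¬ P b → R' a b) {u v : β}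
    (h : Relation.ReflTransGen R u v) :
    Relation.ReflTransGen R' u v ∨
      ∃ a x, Relation.ReflTransGen R' u a ∧ Relation.ReflGen R a x ∧ P x := by
  induction h using Relation.ReflTransGen.head_induction_on with
  | refl =>
    by_cases hv : P v
    · exact .inr ⟨v, v, .refl, .refl, hv⟩
    · exact .inl .refl
  | @head u c huc _ ih =>
    by_cases hu : P u
    · exact .inr ⟨u, u, .refl, .refl, hu⟩
    by_cases hc : P c
    · exact .inr ⟨u, c, .refl, .single huc, hc⟩
    rcases ih with ih | ⟨a, x, hca, hax, hx⟩
    · exact .inl (.head (hR u c huc hu hc) ih)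
    · exact .inr ⟨a, x, .head (hR u c huc hu hc) hca, hax, hx⟩

section MonoReach

variable {V α : Type} {H H' : SimpleGraph V} {c : V → α} {u v : V}

lemma MonoReach.mono (hH : H ≤ H') (h : MonoReach H c u v) : MonoReach H' c u v :=
  Relation.ReflTransGen.mono (fun _ _ hab ↦ ⟨hH hab.1, hab.2⟩) _ _ h

lemma MonoReach.symm (h : MonoReach H c u v) : MonoReach H c v u :=
  Relation.ReflTransGen.mono (fun _ _ hab ↦ ⟨hab.1.symm, hab.2.symm⟩) _ _
    (Relation.ReflTransGen.swap _ _ h)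

end MonoReach

lemma fstar_mono (r ℓ N : ℕ) : Monotone (fstar r ℓ N) :=
  monotone_nat_of_le_succ fun k ↦ by simp only [fstar]; omega

lemma ballSet_empty {V : Type} (G : SimpleGraph V) (r : ℕ) : ballSet G ∅ r = ∅ := by
  simp [ballSet]

section Recoloring

variable {V α : Type} {G : SimpleGraph V} {Z : Set V} {r ℓ : ℕ} {c : V → α} {u v : V}

lemma MonoReach.eq_or_notMem_of_powAvoiding (h : MonoReach (G.powAvoiding Z ℓ) c u v) :
    u = v ∨ u ∉ Z := by
  rcases Relation.ReflTransGen.cases_head h with rfl | ⟨_, huw, _⟩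
  · exact .inl rfl
  · exact .inr (powAvoiding_adj_induce huw.1).1

lemma MonoReach.induce_of_powAvoiding (hu : u ∉ Z) (h : MonoReach (G.powAvoiding Z ℓ) c u v) :
    ∃ hv : v ∉ Z,
      MonoReach ((G.induce {v | v ∉ Z}).pow ℓ) (fun x ↦ c x) ⟨u, hu⟩ ⟨v, hv⟩ := by
  induction h with
  | refl => exact ⟨hu, .refl⟩
  | tail _ hbw ih =>
    obtain ⟨_, hw, hadj⟩ := powAvoiding_adj_induce hbw.1
    exact ⟨hw, ih.2.tail ⟨hadj, hbw.2⟩⟩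

lemma MonoReach.edist_pow_le_of_powAvoiding {N : ℕ∞}
    (hc : ∀ u v, MonoReach ((G.induce {v | v ∉ Z}).pow ℓ) (fun x ↦ c x) u v →
      ((G.induce {v | v ∉ Z}).pow ℓ).edist u v ≤ N)
    (h : MonoReach (G.powAvoiding Z ℓ) c u v) : (G.pow ℓ).edist u v ≤ N := by
  rcases h.eq_or_notMem_of_powAvoiding with rfl | hu
  · simp
  obtain ⟨hv, huv⟩ := h.induce_of_powAvoiding hu
  exact (edist_pow_le_edist_induce_pow _ ⟨u, hu⟩ ⟨v, hv⟩).trans (hc _ _ huv)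

lemma powAvoiding_diff_ballSet_adj_diff_singleton (hℓ : 0 < ℓ) {A : Set V} {s a b : V}
    (ha : (r + ℓ : ℕ∞) ≤ G.edist s a) (hb : (r + ℓ : ℕ∞) ≤ G.edist s b)
    (h : (G.powAvoiding (Z \ ballSet G A r) ℓ).Adj a b) :
    (G.powAvoiding (Z \ ballSet G (A \ {s}) r) ℓ).Adj a b := by
  obtain ⟨hne, p, hp, hY⟩ := h
  refine ⟨hne, p, hp, fun x hx ⟨hxZ, hxA'⟩ ↦ ?_⟩
  obtain ⟨s', hs'A, hs'x⟩ : x ∈ ballSet G A r := by_contra fun hxA ↦ hY x hx ⟨hxZ, hxA⟩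
  obtain rfl : s' = s := by_contra fun hs' ↦ hxA' ⟨s', ⟨hs'A, hs'⟩, hs'x⟩
  have key : ((r + ℓ) + (r + ℓ) : ℕ∞) ≤ 2 * r + ℓ :=
    calc ((r + ℓ) + (r + ℓ) : ℕ∞)
        ≤ (G.edist s' x + G.edist x a) + (G.edist s' x + G.edist x b) :=
          add_le_add (ha.trans SimpleGraph.edist_triangle) (hb.trans SimpleGraph.edist_triangle)
      _ = 2 * G.edist s' x + (G.edist a x + G.edist x b) := by rw [edist_comm (u := x)]; ring
      _ ≤ 2 * r + ℓ := by
          gcongr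
          exact (p.edist_add_edist_le_length hx).trans (by exact_mod_cast hp)
  norm_cast at key
  omega

lemma MonoReach.edist_pow_le_or_exists_near (hℓ : 0 < ℓ) {A : Set V} {s : V} {M : ℕ∞}
    (hM : ∀ u v, MonoReach (G.powAvoiding (Z \ ballSet G (A \ {s}) r) ℓ) c u v →
      (G.pow ℓ).edist u v ≤ M)
    (h : MonoReach (G.powAvoiding (Z \ ballSet G A r) ℓ) c u v) :
    (G.pow ℓ).edist u v ≤ M ∨ ∃ x, G.edist s x < r + ℓ ∧ (G.pow ℓ).edist u x ≤ M + 1 := by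
  rcases Relation.ReflTransGen.restrict_or_exists_reflGen (P := fun x ↦ G.edist s x < r + ℓ)
      (R' := fun a b ↦ (G.powAvoiding (Z \ ballSet G (A \ {s}) r) ℓ).Adj a b ∧ c a = c b)
      (fun a b hab ha hb ↦ ⟨powAvoiding_diff_ballSet_adj_diff_singleton hℓ
        (not_lt.mp ha) (not_lt.mp hb) hab.1, hab.2⟩) h with huv | ⟨a, x, hua, hax, hx⟩
  · exact .inl (hM u v huv)
  refine .inr ⟨x, hx, ?_⟩
  have hax' : (G.pow ℓ).edist a x ≤ 1 := by
    rcases hax with _ | hax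
    · simp
    · exact (edist_eq_one_iff_adj.mpr (powAvoiding_le_pow _ hax.1)).le
  exact SimpleGraph.edist_triangle.trans (add_le_add (hM u a hua) hax')

theorem MonoReach.edist_pow_le_fstar (hℓ : 0 < ℓ) {N k : ℕ}
    (hbase : ∀ u v, MonoReach (G.powAvoiding Z ℓ) c u v → (G.pow ℓ).edist u v ≤ N)
    {A : Set V} (hA : A.encard ≤ k) (h : MonoReach (G.powAvoiding (Z \ ballSet G A r) ℓ) c u v) :
    (G.pow ℓ).edist u v ≤ fstar r ℓ N k := by
  induction k generalizing A u v with
  | zero =>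
    obtain rfl : A = ∅ := Set.encard_eq_zero.mp (nonpos_iff_eq_zero.mp hA)
    rw [ballSet_empty, Set.sdiff_empty] at h
    exact hbase u v h
  | succ k ih =>
    have hmono : (fstar r ℓ N k : ℕ∞) ≤ fstar r ℓ N (k + 1) := by
      exact_mod_cast fstar_mono r ℓ N k.le_succ
    rcases A.eq_empty_or_nonempty with rfl | ⟨s, hs⟩
    · exact (ih (by simp) h).trans hmono
    have hA' : (A \ {s}).encard ≤ k := by
      rw [← Set.encard_sdiff_singleton_add_one hs, Nat.cast_succ] at hA
      exact (ENat.add_le_add_iff_right ENat.one_ne_top).mp hA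
    have hM u v := ih (u := u) (v := v) hA'
    rcases h.edist_pow_le_or_exists_near hℓ hM with huv | ⟨x, hx, hux⟩
    · exact huv.trans hmono
    rcases h.symm.edist_pow_le_or_exists_near hℓ hM with hvu | ⟨y, hy, hvy⟩
    · exact edist_comm (G := G.pow ℓ) ▸ hvu.trans hmono
    calc (G.pow ℓ).edist u v
        ≤ (G.pow ℓ).edist u x + ((G.pow ℓ).edist x s + ((G.pow ℓ).edist s y
            + (G.pow ℓ).edist y v)) :=
          (SimpleGraph.edist_triangle (v := x)).trans <| add_le_add le_rfl <|
            (SimpleGraph.edist_triangle (v := s)).trans <|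
              add_le_add le_rfl SimpleGraph.edist_triangle
      _ ≤ (fstar r ℓ N k + 1) + (G.edist s x + (G.edist s y + (fstar r ℓ N k + 1))) := by
          rw [edist_comm (u := x), edist_comm (u := y)]
          gcongr
          all_goals exact le_pow hℓ
      _ = (G.edist s x + 1) + (G.edist s y + 1) + 2 * fstar r ℓ N k := by ring
      _ ≤ (r + ℓ) + (r + ℓ) + 2 * fstar r ℓ N k := by
          grw [Order.add_one_le_of_lt hx, Order.add_one_le_of_lt hy]
      _ = fstar r ℓ N (k + 1) := by simp only [fstar]; push_cast; ring

end Recoloring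

theorem stmt4_general (k r ℓ N : ℕ) (hℓ : 0 < ℓ) :
    N ≤ fstar r ℓ N k ∧
    ∀ {V : Type} (G : SimpleGraph V) (S Z : Set V),
      S.encard ≤ (k : ℕ∞) → Z ⊆ ballSet G S r →
      ∀ (m : ℕ), 0 < m →
      ∀ (cZ : {v : V // v ∈ Z} → Fin m) (c : {v : V // v ∈ ({v | v ∉ Z} : Set V)} → Fin m),
        (∀ u v, MonoReach ((G.induce {v | v ∉ Z}).pow ℓ) c u v →
          ((G.induce {v | v ∉ Z}).pow ℓ).edist u v ≤ (N : ℕ∞)) →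
        ∀ u v, MonoReach (G.pow ℓ)
            (fun x => if h : x ∈ Z then cZ ⟨x, h⟩ else c ⟨x, h⟩) u v →
          (G.pow ℓ).edist u v ≤ ((fstar r ℓ N k : ℕ) : ℕ∞) := by
  refine ⟨fstar_mono r ℓ N k.zero_le, ?_⟩
  intro V G S Z hS hZ m _ cZ c hc u v huv
  set c' : V → Fin m := fun x => if h : x ∈ Z then cZ ⟨x, h⟩ else c ⟨x, h⟩
  have hc' : (fun x : {v | v ∉ Z} ↦ c' x) = c := funext fun x ↦ dif_neg x.2
  have hbase u v (h : MonoReach (G.powAvoiding Z ℓ) c' u v) : (G.pow ℓ).edist u v ≤ N :=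
    h.edist_pow_le_of_powAvoiding (hc' ▸ hc)
  refine MonoReach.edist_pow_le_fstar hℓ hbase hS ?_
  rw [Set.sdiff_eq_empty.mpr hZ]
  exact huv.mono pow_le_powAvoiding_empty

/-- Deleting a `(k,r)`-centered set: combining any coloring of `Z` with a
coloring of `(G−Z)^ℓ` of weak diameter at most `N` gives a coloring of `G^ℓ`
of weak diameter at most `N* = fstar r ℓ N k ≥ N`. -/
theorem stmt4 (k r ℓ N : ℕ) (hℓ : 0 < ℓ) (hN : 0 < N) :
    N ≤ fstar r ℓ N k ∧
    ∀ {V : Type} (G : SimpleGraph V) (S Z : Set V),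
      S.encard ≤ (k : ℕ∞) → Z ⊆ ballSet G S r →
      ∀ (m : ℕ), 0 < m →
      ∀ (cZ : {v : V // v ∈ Z} → Fin m) (c : {v : V // v ∈ ({v | v ∉ Z} : Set V)} → Fin m),
        (∀ u v, MonoReach ((G.induce {v | v ∉ Z}).pow ℓ) c u v →
          ((G.induce {v | v ∉ Z}).pow ℓ).edist u v ≤ (N : ℕ∞)) →
        ∀ u v, MonoReach (G.pow ℓ)
            (fun x => if h : x ∈ Z then cZ ⟨x, h⟩ else c ⟨x, h⟩) u v →
          (G.pow ℓ).edist u v ≤ ((fstar r ℓ N k : ℕ) : ℕ∞) :=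
  stmt4_general k r ℓ N hℓ
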